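/- Let p, q : α → ℝ be nonnegative functions on a finite type α with ∑ p = 1, and let W > 0 be a constant with p(x) + W*q(x) > 0 for all x. Then the function D ↦ ∑ x, p(x)*log(D(x)) + W*q(x)*log(1 - D(x)), over functions D : α → (0,1), is maximized by D*(x) = p(x)/(p(x) + W*q(x)). -/

import Mathlib

/-
The objective separates over `x`, and pointwise `t ↦ a log t + b log (1 - t)` is maximised at
`t = a / (a + b)`: by `log y ≤ y - 1`, `a log (t (a + b) / a) ≤ t (a + b) - a` and
`b log ((1 - t) (a + b) / b) ≤ (1 - t) (a + b) - b`, and the right-hand sides add up to `0`.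
-/

open Real

theorem mul_log_le_mul_log_div_add_sub {c S s : ℝ} (hc : 0 ≤ c) (hS : 0 < S) (hs : 0 < s) :
    c * log s ≤ c * log (c / S) + (s * S - c) := by
  rcases hc.eq_or_lt with rfl | hc
  · simp only [zero_mul, zero_add, sub_zero]
    positivity
  calc c * log s = c * log (c / S) + c * log (s * S / c) := by
        rw [← mul_add, ← log_mul (by positivity) (by positivity)]
        field_simp
    _ ≤ c * log (c / S) + c * (s * S / c - 1) := by
        gcongr
        exact log_le_sub_one_of_pos (by positivity)
    _ = c * log (c / S) + (s * S - c) := by field_simp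

theorem mul_log_add_mul_log_one_sub_le {a b t : ℝ} (ha : 0 ≤ a) (hb : 0 ≤ b) (hab : 0 < a + b)
    (ht : t ∈ Set.Ioo (0 : ℝ) 1) :
    a * log t + b * log (1 - t) ≤
      a * log (a / (a + b)) + b * log (1 - a / (a + b)) := by
  have h_one_sub : 1 - a / (a + b) = b / (a + b) := by field_simp; ring
  rw [h_one_sub]
  have hA := mul_log_le_mul_log_div_add_sub ha hab ht.1
  have hB := mul_log_le_mul_log_div_add_sub hb hab (sub_pos.2 ht.2)
  linarith

theorem stmt_6_general {α : Type*} [Fintype α] (p q : α → ℝ) (W : ℝ)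
    (hp : ∀ x, 0 ≤ p x) (hq : ∀ x, 0 ≤ q x)
    (hW : 0 < W)
    (hpq : ∀ x, 0 < p x + W * q x)
    (D : α → ℝ) (hD : ∀ x, D x ∈ Set.Ioo (0 : ℝ) 1) :
    ∑ x, (p x * Real.log (D x) + W * q x * Real.log (1 - D x)) ≤
    ∑ x, (p x * Real.log (p x / (p x + W * q x)) +
          W * q x * Real.log (1 - p x / (p x + W * q x))) :=
  Finset.sum_le_sum fun x _ =>
    mul_log_add_mul_log_one_sub_le (hp x) (mul_nonneg hW.le (hq x)) (hpq x) (hD x)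

theorem stmt_6 {α : Type*} [Fintype α] (p q : α → ℝ) (W : ℝ)
    (hp : ∀ x, 0 ≤ p x) (hq : ∀ x, 0 ≤ q x)
    (hps : ∑ x, p x = 1) (hW : 0 < W)
    (hpq : ∀ x, 0 < p x + W * q x)
    (D : α → ℝ) (hD : ∀ x, D x ∈ Set.Ioo (0 : ℝ) 1) :
    ∑ x, (p x * Real.log (D x) + W * q x * Real.log (1 - D x)) ≤
    ∑ x, (p x * Real.log (p x / (p x + W * q x)) +
          W * q x * Real.log (1 - p x / (p x + W * q x))) :=
  stmt_6_general p q W hp hq hW hpq D hD
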